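/- Every algebra automorphism of the 3-dimensional complex algebra with single nonzero product e₁e₂ = e₃ (the algebra B³*₀₄(0)) has matrix of the form [[x,0,0],[0,y,0],[z,t,xy]] with x,y ∈ ℂ*, z,t ∈ ℂ, with respect to the basis e₁,e₂,e₃, and conversely all such matrices give automorphisms. -/

import Mathlib

/-!
Since `e₃ = e₁e₂`, an automorphism `φ` sends `e₃` to `φ(e₁)φ(e₂) = xy • e₃`, where `x` is the
`e₁`-coordinate of `φ(e₁)` and `y` the `e₂`-coordinate of `φ(e₂)`; injectivity forces `xy ≠ 0`.
Then `φ(e₁)² = φ(e₁e₁) = 0` and `φ(e₂)² = 0` kill the `e₂`-coordinate of `φ(e₁)` and the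
`e₁`-coordinate of `φ(e₂)`. Conversely the matrix `[[x,0,0],[0,y,0],[z,t,xy]]` multiplies `e₃`
and every product by `xy`, and its determinant `(xy)²` is nonzero.
-/

noncomputable def mB3s040 : (Fin 3 → ℂ) →ₗ[ℂ] (Fin 3 → ℂ) →ₗ[ℂ] (Fin 3 → ℂ) :=
  LinearMap.mk₂ ℂ (fun u v => ![0, 0, u 0 * v 1])
    (fun x y v => by funext i; fin_cases i <;> simp <;> ring)
    (fun a x v => by funext i; fin_cases i <;> simp <;> ring)
    (fun u x y => by funext i; fin_cases i <;> simp <;> ring)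
    (fun u a x => by funext i; fin_cases i <;> simp <;> ring)

lemma mB3s040_apply (u v : Fin 3 → ℂ) : mB3s040 u v = (u 0 * v 1) • Pi.single 2 1 := by
  ext i; fin_cases i <;> simp [mB3s040]

section autMatrix

variable {R : Type*} [CommRing R]

def autMatrix (x y z t : R) : Matrix (Fin 3) (Fin 3) R := !![x, 0, 0; 0, y, 0; z, t, x * y]

lemma toLin'_autMatrix_apply (x y z t : R) (u : Fin 3 → R) :
    Matrix.toLin' (autMatrix x y z t) u =
      ![x * u 0, y * u 1, z * u 0 + t * u 1 + x * y * u 2] := by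
  ext i; fin_cases i <;> simp [autMatrix, Matrix.mulVec, dotProduct, Fin.sum_univ_three]

lemma det_autMatrix (x y z t : R) : (autMatrix x y z t).det = (x * y) ^ 2 := by
  simp [autMatrix, Matrix.det_fin_three]; ring

lemma eq_toLin'_autMatrix_iff (f : (Fin 3 → R) →ₗ[R] (Fin 3 → R)) (x y z t : R) :
    f = Matrix.toLin' (autMatrix x y z t) ↔
      f (Pi.single 0 1) = x • Pi.single 0 1 + z • Pi.single 2 1 ∧
      f (Pi.single 1 1) = y • Pi.single 1 1 + t • Pi.single 2 1 ∧
      f (Pi.single 2 1) = (x * y) • Pi.single 2 1 := by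
  constructor
  · rintro rfl
    refine ⟨?_, ?_, ?_⟩ <;> ext i <;> fin_cases i <;> simp [autMatrix]
  · rintro ⟨h0, h1, h2⟩
    refine (Pi.basisFun R (Fin 3)).ext fun j => ?_
    fin_cases j <;> ext i <;> fin_cases i <;> simp [autMatrix, h0, h1, h2]

end autMatrix

lemma toLin'_autMatrix_map_mB3s040 (x y z t : ℂ) (u v : Fin 3 → ℂ) :
    Matrix.toLin' (autMatrix x y z t) (mB3s040 u v) =
      mB3s040 (Matrix.toLin' (autMatrix x y z t) u) (Matrix.toLin' (autMatrix x y z t) v) := by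
  simp only [mB3s040_apply, map_smul, toLin'_autMatrix_apply]
  ext i; fin_cases i <;> simp; ring

lemma exists_eq_toLin'_autMatrix (f : (Fin 3 → ℂ) →ₗ[ℂ] (Fin 3 → ℂ)) (hf : Function.Injective f)
    (hmul : ∀ u v, f (mB3s040 u v) = mB3s040 (f u) (f v)) :
    ∃ x y z t, x ≠ 0 ∧ y ≠ 0 ∧ f = Matrix.toLin' (autMatrix x y z t) := by
  set e₀ : Fin 3 → ℂ := Pi.single 0 1
  set e₁ : Fin 3 → ℂ := Pi.single 1 1
  set e₂ : Fin 3 → ℂ := Pi.single 2 1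
  have he₂ : f e₂ = (f e₀ 0 * f e₁ 1) • e₂ := by
    simpa [e₀, e₁, e₂, mB3s040_apply] using hmul e₀ e₁
  have hxy : f e₀ 0 * f e₁ 1 ≠ 0 := by
    intro h
    rw [h, zero_smul, ← map_zero f] at he₂
    simpa [e₂] using hf he₂
  have he₀₀ : f e₀ 0 = 0 ∨ f e₀ 1 = 0 := by
    simpa [e₀, mB3s040_apply] using congrFun (hmul e₀ e₀) 2
  have he₁₁ : f e₁ 0 = 0 ∨ f e₁ 1 = 0 := by
    simpa [e₁, mB3s040_apply] using congrFun (hmul e₁ e₁) 2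
  refine ⟨f e₀ 0, f e₁ 1, f e₀ 2, f e₁ 2, left_ne_zero_of_mul hxy, right_ne_zero_of_mul hxy,
    (eq_toLin'_autMatrix_iff f _ _ _ _).2 ⟨?_, ?_, he₂⟩⟩
  · have : f e₀ 1 = 0 := he₀₀.resolve_left (left_ne_zero_of_mul hxy)
    ext i; fin_cases i <;> simp [e₀, this]
  · have : f e₁ 0 = 0 := he₁₁.resolve_right (right_ne_zero_of_mul hxy)
    ext i; fin_cases i <;> simp [e₁, this]

/-- The automorphisms of the algebra with single nonzero product `e₁e₂ = e₃` are
exactly the linear maps with matrix `[[x,0,0],[0,y,0],[z,t,xy]]`, `x,y ≠ 0`. -/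
theorem B3s040_automorphisms :
    (∀ φ : (Fin 3 → ℂ) ≃ₗ[ℂ] (Fin 3 → ℂ),
      (∀ u v : Fin 3 → ℂ, φ (mB3s040 u v) = mB3s040 (φ u) (φ v)) ↔
      (∃ x y z t : ℂ, x ≠ 0 ∧ y ≠ 0 ∧
        φ ((Pi.single 0 1 : Fin 3 → ℂ)) = x • (Pi.single 0 1 : Fin 3 → ℂ) + z • (Pi.single 2 1 : Fin 3 → ℂ) ∧
        φ ((Pi.single 1 1 : Fin 3 → ℂ)) = y • (Pi.single 1 1 : Fin 3 → ℂ) + t • (Pi.single 2 1 : Fin 3 → ℂ) ∧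
        φ ((Pi.single 2 1 : Fin 3 → ℂ)) = (x * y) • (Pi.single 2 1 : Fin 3 → ℂ))) ∧
    (∀ x y z t : ℂ, x ≠ 0 → y ≠ 0 →
      ∃ φ : (Fin 3 → ℂ) ≃ₗ[ℂ] (Fin 3 → ℂ),
        (∀ u v : Fin 3 → ℂ, φ (mB3s040 u v) = mB3s040 (φ u) (φ v)) ∧
        φ ((Pi.single 0 1 : Fin 3 → ℂ)) = x • (Pi.single 0 1 : Fin 3 → ℂ) + z • (Pi.single 2 1 : Fin 3 → ℂ) ∧
        φ ((Pi.single 1 1 : Fin 3 → ℂ)) = y • (Pi.single 1 1 : Fin 3 → ℂ) + t • (Pi.single 2 1 : Fin 3 → ℂ) ∧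
        φ ((Pi.single 2 1 : Fin 3 → ℂ)) = (x * y) • (Pi.single 2 1 : Fin 3 → ℂ)) := by
  refine ⟨fun φ => ⟨fun hmul => ?_, fun ⟨x, y, z, t, _, _, hφ⟩ => ?_⟩, fun x y z t hx hy => ?_⟩
  · obtain ⟨x, y, z, t, hx, hy, hφ⟩ := exists_eq_toLin'_autMatrix φ.toLinearMap φ.injective hmul
    exact ⟨x, y, z, t, hx, hy, (eq_toLin'_autMatrix_iff _ x y z t).1 hφ⟩
  · have hφ : φ.toLinearMap = Matrix.toLin' (autMatrix x y z t) :=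
      (eq_toLin'_autMatrix_iff _ x y z t).2 hφ
    intro u v
    simpa only [← hφ, LinearEquiv.coe_coe] using toLin'_autMatrix_map_mB3s040 x y z t u v
  · have hdet : IsUnit (autMatrix x y z t).det := by
      rw [det_autMatrix]; exact (mul_ne_zero hx hy).isUnit.pow 2
    let φ := (autMatrix x y z t).toLinearEquiv' (Matrix.invertibleOfIsUnitDet _ hdet)
    have hφ : φ.toLinearMap = Matrix.toLin' (autMatrix x y z t) := rfl
    refine ⟨φ, fun u v => ?_, (eq_toLin'_autMatrix_iff _ x y z t).1 hφ⟩
    simpa only [← hφ, LinearEquiv.coe_coe] using toLin'_autMatrix_map_mB3s040 x y z t u v
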